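/- arXiv:1902.00973 — 2 statements merged into one kernel-verified Lean document; each statement's English description precedes it below -/
import Mathlib

section
/- Let Q ⊆ ℝ^n be a nonempty polytope, P ⊆ ℝ^n a nonempty lattice polytope with vertex set V(P) = {v_1, …, v_r}, and f : ℝ^n → ℝ^l a linear map with f(ℤ^n) ⊆ ℤ^l. For a polytope S ⊆ ℝ^n define f̄(σ_S) = Σ_{m ∈ S ∩ ℤ^n} x^{f(m)} ∈ ℂ[ℤ^l] (a sum with multiplicity: the coefficient of a monomial x^u is the number of lattice points m of S with f(m) = u). Then for every integer k ≥ 0: Σ_{I⊆[r]} (−1)^{|I|} · x^{f(Σ_{i∈I} v_i)} · f̄(σ_{(k+r−|I|)P+Q}) = 0 in ℂ[ℤ^l]; that is, the sequence {f̄(σ_{kP+Q})}_{k≥0} satisfies a linear recursion with characteristic polynomial ∏_{v∈V(P)} (X − x^{f(v)}). -/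
open scoped BigOperators Pointwise

noncomputable section

/-- Coercion of an integer lattice point to a real vector. -/
def latC {n : ℕ} (m : Fin n → ℤ) : Fin n → ℝ := fun i => (m i : ℝ)

/-- A polytope is the convex hull of a finite set of points in `ℝ^n`. -/
def IsPolytope {n : ℕ} (S : Set (Fin n → ℝ)) : Prop :=
  ∃ F : Finset (Fin n → ℝ), S = convexHull ℝ (F : Set (Fin n → ℝ))

/-- A lattice polytope is the convex hull of finitely many lattice points. -/
def IsLatticePolytope {n : ℕ} (S : Set (Fin n → ℝ)) : Prop :=
  ∃ F : Finset (Fin n → ℤ), S = convexHull ℝ (latC '' (F : Set (Fin n → ℤ)))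

/-- The integer point transform `σ_S = ∑_{m ∈ S ∩ ℤ^n} x^m ∈ ℂ[ℤ^n]`. -/
def intPtTransform {n : ℕ} (S : Set (Fin n → ℝ)) : AddMonoidAlgebra ℂ (Fin n → ℤ) :=
  ∑ᶠ m ∈ {m : Fin n → ℤ | latC m ∈ S}, AddMonoidAlgebra.single m 1

/-!
Write `w_i` for the vertices of `P` and, for a lattice point `x`, let `Λ` be the convex set of
weights `μ ∈ (k + r)·Δ` with `x - ∑ μ_i w_i ∈ Q`. Shifting weights by the indicator of `I` shows
that `x - ∑_{i ∈ I} w_i ∈ (k + r - |I|) P + Q` iff `Λ` meets the orthant `{μ_i ≥ 1 for i ∈ I}`.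
Since `∑ μ_i = k + r ≥ r` on `Λ`, the alternating sum over `I` of these incidences vanishes,
by induction on the coordinates: the terms with and without `a ∈ I` combine into the difference
of the sums for `Λ ∩ {μ_a ≤ 1}` and `Λ ∩ {μ_a = 1}`, because a convex set meets `{μ_a = 1}`
iff it meets both half-spaces `{μ_a ≤ 1}` and `{μ_a ≥ 1}`.
So every coefficient of `∑_I (-1)^|I| x^{v_I} σ_{(k+r-|I|)P+Q}` is zero, and the projection
`f̄`, a ring homomorphism, carries this identity to the stated one.
-/

theorem Convex.exists_mem_eq_of_le_of_le {E : Type*} [AddCommGroup E] [Module ℝ E] {C : Set E}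
    (hC : Convex ℝ C) (φ : E →ₗ[ℝ] ℝ) {x y : E} (hx : x ∈ C) (hy : y ∈ C) {c : ℝ}
    (hxc : φ x ≤ c) (hcy : c ≤ φ y) : ∃ z ∈ C, φ z = c := by
  have hc : c ∈ φ '' segment ℝ x y := by
    change c ∈ φ.toAffineMap '' _
    rw [image_segment, φ.coe_toAffineMap, segment_eq_Icc (hxc.trans hcy)]
    exact ⟨hxc, hcy⟩
  obtain ⟨z, hz, rfl⟩ := hc
  exact ⟨z, hC.segment_subset hx hy hz, rfl⟩

theorem Convex.inter_hyperplane_nonempty_iff {E : Type*} [AddCommGroup E] [Module ℝ E]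
    {C : Set E} (hC : Convex ℝ C) (φ : E →ₗ[ℝ] ℝ) (c : ℝ) :
    (C ∩ {x | φ x = c}).Nonempty ↔
      (C ∩ {x | φ x ≤ c}).Nonempty ∧ (C ∩ {x | c ≤ φ x}).Nonempty := by
  refine ⟨fun ⟨x, hx, hxc⟩ => ⟨⟨x, hx, hxc.out.le⟩, ⟨x, hx, hxc.out.ge⟩⟩, ?_⟩
  rintro ⟨⟨x, hx, hxc⟩, ⟨y, hy, hcy⟩⟩
  exact hC.exists_mem_eq_of_le_of_le φ hx hy hxc hcy

theorem Set.nonempty_iff_inter_le_or_inter_ge {E : Type*} (C : Set E) (φ : E → ℝ) (c : ℝ) :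
    C.Nonempty ↔ (C ∩ {x | φ x ≤ c}).Nonempty ∨ (C ∩ {x | c ≤ φ x}).Nonempty := by
  rw [← Set.union_nonempty, ← Set.inter_union_distrib_left]
  congr!
  exact (Set.inter_eq_left.2 fun x _ => le_total (φ x) c).symm

section Orthant

variable {ι : Type*}

def upperOrthant (I : Finset ι) : Set (ι → ℝ) := {μ | ∀ i ∈ I, 1 ≤ μ i}

theorem convex_upperOrthant (I : Finset ι) : Convex ℝ (upperOrthant I) :=
  convex_pi fun _ _ => convex_Ici 1

@[simp]
theorem upperOrthant_empty : upperOrthant (∅ : Finset ι) = Set.univ := by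
  simp [upperOrthant]

theorem upperOrthant_insert [DecidableEq ι] (a : ι) (I : Finset ι) :
    upperOrthant (insert a I) = upperOrthant I ∩ {μ | 1 ≤ μ a} := by
  ext μ
  simp [upperOrthant, and_comm]

open scoped Classical in
theorem neg_one_pow_mul_ite_nonempty_add_insert {R : Type*} [CommRing R] [DecidableEq ι]
    {Λ : Set (ι → ℝ)} (hΛ : Convex ℝ Λ) {a : ι} {I : Finset ι} (haI : a ∉ I) :
    (-1 : R) ^ I.card * (if (Λ ∩ upperOrthant I).Nonempty then 1 else 0) +
        (-1 : R) ^ (insert a I).card *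
          (if (Λ ∩ upperOrthant (insert a I)).Nonempty then 1 else 0) =
      (-1 : R) ^ I.card * (if (Λ ∩ {μ | μ a ≤ 1} ∩ upperOrthant I).Nonempty then 1 else 0) -
        (-1 : R) ^ I.card * (if (Λ ∩ {μ | μ a = 1} ∩ upperOrthant I).Nonempty then 1 else 0) := by
  have hcross := (hΛ.inter (convex_upperOrthant I)).inter_hyperplane_nonempty_iff
    (LinearMap.proj a) 1
  simp only [LinearMap.proj_apply] at hcross
  rw [Finset.card_insert_of_notMem haI, pow_succ, upperOrthant_insert, ← Set.inter_assoc,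
    Set.inter_right_comm Λ {μ | μ a ≤ 1}, Set.inter_right_comm Λ {μ | μ a = 1}, hcross,
    Set.nonempty_iff_inter_le_or_inter_ge (Λ ∩ upperOrthant I) (fun μ => μ a) 1]
  by_cases h₁ : (Λ ∩ upperOrthant I ∩ {μ | μ a ≤ 1}).Nonempty <;>
    by_cases h₂ : (Λ ∩ upperOrthant I ∩ {μ | 1 ≤ μ a}).Nonempty <;> simp [h₁, h₂]

open scoped Classical in
theorem sum_powerset_neg_one_pow_mul_ite_nonempty_eq_zero {R : Type*} [CommRing R]
    [DecidableEq ι] {s : Finset ι} (hs : s.Nonempty) {Λ : Set (ι → ℝ)} (hΛ : Convex ℝ Λ)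
    (hsum : ∀ μ ∈ Λ, (s.card : ℝ) ≤ ∑ i ∈ s, μ i) :
    ∑ I ∈ s.powerset, (-1 : R) ^ I.card *
      (if (Λ ∩ upperOrthant I).Nonempty then 1 else 0) = 0 := by
  induction hs using Finset.Nonempty.cons_induction generalizing Λ with
  | singleton a =>
    have hΛa : Λ ∩ upperOrthant {a} = Λ :=
      Set.inter_eq_left.2 fun μ hμ => by simpa [upperOrthant] using hsum μ hμ
    rw [← Finset.insert_empty, Finset.sum_powerset_insert (Finset.notMem_empty a)]
    by_cases hne : Λ.Nonempty <;> simp [hΛa, hne]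
  | cons a s ha hs ih =>
    have hsum_le : ∀ μ ∈ Λ ∩ {μ | μ a ≤ 1}, (s.card : ℝ) ≤ ∑ i ∈ s, μ i := by
      rintro μ ⟨hμ, hμa⟩
      have := hsum μ hμ
      rw [Finset.sum_cons, Finset.card_cons] at this
      push_cast at this
      linarith [hμa.out]
    have hsum_eq : ∀ μ ∈ Λ ∩ {μ | μ a = 1}, (s.card : ℝ) ≤ ∑ i ∈ s, μ i :=
      fun μ ⟨hμ, hμa⟩ => hsum_le μ ⟨hμ, hμa.out.le⟩
    have hproj : IsLinearMap ℝ fun μ : ι → ℝ => μ a := (LinearMap.proj (R := ℝ) a).isLinear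
    rw [Finset.cons_eq_insert, Finset.sum_powerset_insert ha, ← Finset.sum_add_distrib,
      Finset.sum_congr rfl fun I hI => neg_one_pow_mul_ite_nonempty_add_insert hΛ
        fun h => ha (Finset.mem_powerset.1 hI h),
      Finset.sum_sub_distrib, ih (hΛ.inter (convex_halfSpace_le hproj 1)) hsum_le,
      ih (hΛ.inter (convex_hyperplane hproj 1)) hsum_eq, sub_zero]

end Orthant

section Simplex

variable {ι E : Type*} [Fintype ι] [AddCommGroup E] [Module ℝ E]

theorem smul_stdSimplex [Nonempty ι] {t : ℝ} (ht : 0 ≤ t) :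
    t • stdSimplex ℝ ι = {μ | (∀ i, 0 ≤ μ i) ∧ ∑ i, μ i = t} := by
  ext μ
  constructor
  · rintro ⟨ν, ⟨hν₀, hν₁⟩, rfl⟩
    simp only [Set.mem_ofPred_eq, Pi.smul_apply, smul_eq_mul, ← Finset.mul_sum, hν₁, mul_one]
    exact ⟨fun i => mul_nonneg ht (hν₀ i), trivial⟩
  · rintro ⟨hμ₀, hμ₁⟩
    rcases ht.eq_or_lt with rfl | ht
    · have hμ : μ = 0 := funext fun i =>
        (Finset.sum_eq_zero_iff_of_nonneg fun i _ => hμ₀ i).1 hμ₁ i (Finset.mem_univ i)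
      rw [hμ, Set.zero_smul_set (isPathConnected_stdSimplex (ι := ι)).nonempty]
      rfl
    · refine ⟨t⁻¹ • μ, ⟨fun i => mul_nonneg (inv_nonneg.2 ht.le) (hμ₀ i), ?_⟩,
        smul_inv_smul₀ ht.ne' μ⟩
      simp [← Finset.mul_sum, hμ₁, ht.ne']

theorem convexHull_range_eq_image_stdSimplex (w : ι → E) :
    convexHull ℝ (Set.range w) = Fintype.linearCombination ℝ w '' stdSimplex ℝ ι := by
  classical
  rw [← convexHull_rangle_single_eq_stdSimplex, LinearMap.image_convexHull, ← Set.range_comp]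
  simp [Function.comp_def, Fintype.linearCombination_apply_single]

theorem sub_sum_single_mem_smul_stdSimplex_iff [Nonempty ι] [DecidableEq ι] {I : Finset ι}
    {c : ℝ} (hc : I.card ≤ c) (μ : ι → ℝ) :
    μ - ∑ i ∈ I, Pi.single i 1 ∈ (c - I.card) • stdSimplex ℝ ι ↔
      μ ∈ c • stdSimplex ℝ ι ∩ upperOrthant I := by
  rw [smul_stdSimplex (sub_nonneg.2 hc), smul_stdSimplex ((Nat.cast_nonneg _).trans hc)]
  simp only [Set.mem_ofPred_eq, Set.mem_inter_iff, upperOrthant, Pi.sub_apply, Finset.sum_apply,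
    Finset.sum_pi_single, Finset.sum_sub_distrib, Finset.sum_ite_mem, Finset.univ_inter,
    Finset.sum_const, nsmul_one, sub_left_inj]
  refine ⟨fun ⟨hμ₀, hμ₁⟩ => ⟨⟨fun i => ?_, hμ₁⟩, fun i hi => ?_⟩,
    fun ⟨⟨hμ₀, hμ₁⟩, hμI⟩ => ⟨fun i => ?_, hμ₁⟩⟩
  · have := hμ₀ i
    split_ifs at this <;> linarith
  · simpa [hi] using hμ₀ i
  · split_ifs with hi
    exacts [sub_nonneg.2 (hμI i hi), by simpa using hμ₀ i]

def decompositionWeights (w : ι → E) (Q : Set E) (c : ℝ) (y : E) : Set (ι → ℝ) :=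
  {μ ∈ c • stdSimplex ℝ ι | y - Fintype.linearCombination ℝ w μ ∈ Q}

theorem convex_decompositionWeights (w : ι → E) {Q : Set E} (hQ : Convex ℝ Q) (c : ℝ) (y : E) :
    Convex ℝ (decompositionWeights w Q c y) := by
  refine ((convex_stdSimplex ℝ ι).smul c).inter ?_
  exact hQ.affine_preimage
    (AffineMap.const ℝ (ι → ℝ) y - (Fintype.linearCombination ℝ w).toAffineMap)

theorem sum_eq_of_mem_decompositionWeights [Nonempty ι] {w : ι → E} {Q : Set E} {c : ℝ}
    (hc : 0 ≤ c) {y : E} {μ : ι → ℝ} (hμ : μ ∈ decompositionWeights w Q c y) :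
    ∑ i, μ i = c := by
  have hμ_simplex := hμ.1
  rw [smul_stdSimplex hc] at hμ_simplex
  exact hμ_simplex.2

theorem sub_sum_mem_smul_convexHull_add_iff [Nonempty ι] [DecidableEq ι] (w : ι → E)
    (Q : Set E) (y : E) {I : Finset ι} {c : ℝ} (hc : I.card ≤ c) :
    y - ∑ i ∈ I, w i ∈ (c - I.card) • convexHull ℝ (Set.range w) + Q ↔
      (decompositionWeights w Q c y ∩ upperOrthant I).Nonempty := by
  set W := Fintype.linearCombination ℝ w
  have hW : W (∑ i ∈ I, Pi.single i 1) = ∑ i ∈ I, w i := by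
    simp [W, map_sum, Fintype.linearCombination_apply_single]
  rw [convexHull_range_eq_image_stdSimplex, ← image_smul_set, Set.mem_add]
  constructor
  · rintro ⟨_, ⟨ν, hν, rfl⟩, q, hq, hνq⟩
    refine ⟨ν + ∑ i ∈ I, Pi.single i 1, ?_⟩
    have hμ := (sub_sum_single_mem_smul_stdSimplex_iff hc (ν + ∑ i ∈ I, Pi.single i 1)).1
      (by simpa using hν)
    refine ⟨⟨hμ.1, ?_⟩, hμ.2⟩
    rwa [map_add, hW, sub_add_eq_sub_sub, sub_right_comm, ← hνq, add_sub_cancel_left]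
  · rintro ⟨μ, ⟨hμ, hyμ⟩, hμI⟩
    refine ⟨_, ⟨_, (sub_sum_single_mem_smul_stdSimplex_iff hc μ).2 ⟨hμ, hμI⟩, rfl⟩, _, hyμ, ?_⟩
    rw [map_sub, hW]
    abel

end Simplex

section Lattice

variable {n : ℕ}

theorem latC_injective : Function.Injective (latC (n := n)) :=
  fun a b h => funext fun i => by simpa [latC] using congrFun h i

theorem latC_add (a b : Fin n → ℤ) : latC (a + b) = latC a + latC b := by
  funext i
  simp [latC]

theorem latC_neg_add (a b : Fin n → ℤ) : latC (-a + b) = latC b - latC a := by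
  funext i
  simp [latC, neg_add_eq_sub]

theorem latC_sum {ι : Type*} (s : Finset ι) (v : ι → Fin n → ℤ) :
    latC (∑ i ∈ s, v i) = ∑ i ∈ s, latC (v i) := by
  funext j
  simp [latC, Finset.sum_apply]

theorem finite_setOf_latC_mem {S : Set (Fin n → ℝ)} (hS : Bornology.IsBounded S) :
    {m | latC m ∈ S}.Finite := by
  obtain ⟨R, hR⟩ := hS.subset_closedBall 0
  refine (Set.Finite.pi (t := fun _ => Set.Icc (-⌈R⌉) ⌈R⌉) fun _ => Set.finite_Icc _ _).subset ?_
  intro m hm i _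
  have hmi : |(m i : ℝ)| ≤ R :=
    (norm_le_pi_norm (latC m) i).trans (mem_closedBall_zero_iff.1 (hR hm))
  rw [abs_le] at hmi
  constructor
  · exact_mod_cast (neg_le_neg (Int.le_ceil R)).trans hmi.1
  · exact_mod_cast hmi.2.trans (Int.le_ceil R)

theorem finite_setOf_latC_mem_smul_add {P Q : Set (Fin n → ℝ)} (hP : Bornology.IsBounded P)
    (hQ : Bornology.IsBounded Q) (t : ℝ) : {m | latC m ∈ t • P + Q}.Finite :=
  finite_setOf_latC_mem (isBounded_add (hP.smul₀ t) hQ)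

open scoped Classical in
theorem coeff_intPtTransform {S : Set (Fin n → ℝ)} (hS : {m | latC m ∈ S}.Finite)
    (m : Fin n → ℤ) : (intPtTransform S).coeff m = if latC m ∈ S then 1 else 0 := by
  rw [intPtTransform, finsum_mem_eq_finite_toFinset_sum _ hS, AddMonoidAlgebra.coeff_sum,
    Finset.sum_apply']
  simp [AddMonoidAlgebra.coeff_single, Finsupp.single_apply]

theorem map_add_of_latC_eq {l : ℕ} {f : (Fin n → ℝ) →ₗ[ℝ] (Fin l → ℝ)}
    {g : (Fin n → ℤ) → (Fin l → ℤ)} (hg : ∀ m, latC (g m) = f (latC m)) (a b : Fin n → ℤ) :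
    g (a + b) = g a + g b :=
  latC_injective <| by rw [latC_add, hg, hg, hg, latC_add, map_add]

theorem mapDomainRingHom_intPtTransform {l : ℕ} (G : (Fin n → ℤ) →+ (Fin l → ℤ))
    {S : Set (Fin n → ℝ)} (hS : {m | latC m ∈ S}.Finite) :
    AddMonoidAlgebra.mapDomainRingHom ℂ G (intPtTransform S) =
      ∑ᶠ m ∈ {m | latC m ∈ S}, AddMonoidAlgebra.single (G m) 1 := by
  rw [intPtTransform, finsum_mem_eq_finite_toFinset_sum _ hS,
    finsum_mem_eq_finite_toFinset_sum _ hS, map_sum]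
  simp [AddMonoidAlgebra.mapDomain_single]

end Lattice

theorem IsCompact.convexHull_eq_of_extremePoints_eq {E : Type*} [AddCommGroup E] [Module ℝ E]
    [TopologicalSpace E] [T2Space E] [IsTopologicalAddGroup E] [ContinuousSMul ℝ E]
    [LocallyConvexSpace ℝ E] {P s : Set E} (hPc : IsCompact P) (hPv : Convex ℝ P)
    (hs : s.Finite) (hPs : P.extremePoints ℝ = s) : convexHull ℝ s = P := by
  rw [← closure_convexHull_extremePoints hPc hPv, hPs,
    (hs.isCompact_convexHull ℝ).isClosed.closure_eq]

section Polytope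

variable {n : ℕ} {S : Set (Fin n → ℝ)}

theorem IsPolytope.isCompact (hS : IsPolytope S) : IsCompact S := by
  obtain ⟨F, rfl⟩ := hS
  exact F.finite_toSet.isCompact_convexHull ℝ

theorem IsPolytope.convex (hS : IsPolytope S) : Convex ℝ S := by
  obtain ⟨F, rfl⟩ := hS
  exact convex_convexHull ℝ _

theorem IsLatticePolytope.isPolytope (hS : IsLatticePolytope S) : IsPolytope S := by
  classical
  obtain ⟨F, rfl⟩ := hS
  exact ⟨F.image latC, by rw [Finset.coe_image]⟩

end Polytope

theorem sum_powerset_single_mul_intPtTransform_eq_zero {n : ℕ} {ι : Type*} [Fintype ι]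
    [Nonempty ι] (v : ι → Fin n → ℤ) {Q : Set (Fin n → ℝ)} (hQ : Convex ℝ Q)
    (hQb : Bornology.IsBounded Q) {c : ℝ} (hc : Fintype.card ι ≤ c) :
    ∑ I ∈ (Finset.univ : Finset ι).powerset,
      AddMonoidAlgebra.single (∑ i ∈ I, v i) ((-1 : ℂ) ^ I.card) *
        intPtTransform ((c - I.card) • convexHull ℝ (Set.range fun i => latC (v i)) + Q) = 0 := by
  classical
  set w := fun i => latC (v i)
  have hfin (I : Finset ι) :
      {m | latC m ∈ (c - I.card) • convexHull ℝ (Set.range w) + Q}.Finite :=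
    finite_setOf_latC_mem_smul_add
      ((Set.finite_range w).isCompact_convexHull ℝ).isBounded hQb _
  have hcard (I : Finset ι) : (I.card : ℝ) ≤ c :=
    le_trans (by exact_mod_cast Finset.card_le_univ I) hc
  refine AddMonoidAlgebra.ext (Finsupp.ext fun m => ?_)
  simp only [AddMonoidAlgebra.coeff_sum, Finset.sum_apply', AddMonoidAlgebra.coeff_single_mul_apply,
    coeff_intPtTransform (hfin _), latC_neg_add, latC_sum]
  rw [AddMonoidAlgebra.coeff_zero, Finsupp.zero_apply]
  calc _ = ∑ I ∈ (Finset.univ : Finset ι).powerset, (-1 : ℂ) ^ I.card *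
        if (decompositionWeights w Q c (latC m) ∩ upperOrthant I).Nonempty then 1 else 0 :=
        Finset.sum_congr rfl fun I _ => congrArg _ <|
          if_congr (sub_sum_mem_smul_convexHull_add_iff w Q (latC m) (hcard I)) rfl rfl
    _ = 0 := by
      refine sum_powerset_neg_one_pow_mul_ite_nonempty_eq_zero Finset.univ_nonempty
        (convex_decompositionWeights w hQ c _) fun μ hμ => ?_
      rw [sum_eq_of_mem_decompositionWeights ((Nat.cast_nonneg _).trans hc) hμ, Finset.card_univ]
      exact hc

theorem projected_transform_recursion_general {n l r : ℕ}
    (P Q : Set (Fin n → ℝ))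
    (hQpoly : IsPolytope Q)
    (hPlat : IsLatticePolytope P) (hPne : P.Nonempty)
    (v : Fin r → (Fin n → ℤ))
    (hvert : Set.extremePoints ℝ P = Set.range (fun i => latC (v i)))
    (f : (Fin n → ℝ) →ₗ[ℝ] (Fin l → ℝ))
    (g : (Fin n → ℤ) → (Fin l → ℤ))
    (hg : ∀ m : Fin n → ℤ, latC (g m) = f (latC m))
    (k : ℕ) :
    ∑ I ∈ (Finset.univ : Finset (Fin r)).powerset,
      AddMonoidAlgebra.single (g (∑ i ∈ I, v i)) ((-1 : ℂ) ^ I.card) *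
        (∑ᶠ m ∈ {m : Fin n → ℤ | latC m ∈ ((k + r - I.card : ℕ) : ℝ) • P + Q},
          AddMonoidAlgebra.single (g m) (1 : ℂ)) = 0 := by
  have hP : convexHull ℝ (Set.range fun i => latC (v i)) = P :=
    hPlat.isPolytope.isCompact.convexHull_eq_of_extremePoints_eq hPlat.isPolytope.convex
      (Set.finite_range _) hvert
  have : Nonempty (Fin r) := by
    obtain ⟨_, ⟨i, -⟩⟩ := convexHull_nonempty_iff.1 (hP ▸ hPne)
    exact ⟨i⟩
  let G : (Fin n → ℤ) →+ (Fin l → ℤ) := AddMonoidHom.mk' g (map_add_of_latC_eq hg)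
  have key := congrArg (AddMonoidAlgebra.mapDomainRingHom ℂ G) <|
    sum_powerset_single_mul_intPtTransform_eq_zero v hQpoly.convex hQpoly.isCompact.isBounded
      (c := ((k + r : ℕ) : ℝ)) (by simp)
  rw [map_sum, map_zero] at key
  rw [← key]
  refine Finset.sum_congr rfl fun I _ => ?_
  have hI : I.card ≤ k + r := (Finset.card_le_univ I).trans (by simp)
  rw [map_mul, AddMonoidAlgebra.mapDomainRingHom_apply, AddMonoidAlgebra.mapDomain_single,
    mapDomainRingHom_intPtTransform, hP, Nat.cast_sub hI]
  · rfl
  · rw [hP]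
    exact finite_setOf_latC_mem_smul_add hPlat.isPolytope.isCompact.isBounded
      hQpoly.isCompact.isBounded _

theorem projected_transform_recursion {n l r : ℕ}
    (P Q : Set (Fin n → ℝ))
    (hQpoly : IsPolytope Q) (hQne : Q.Nonempty)
    (hPlat : IsLatticePolytope P) (hPne : P.Nonempty)
    (v : Fin r → (Fin n → ℤ)) (hv : Function.Injective v)
    (hvert : Set.extremePoints ℝ P = Set.range (fun i => latC (v i)))
    (f : (Fin n → ℝ) →ₗ[ℝ] (Fin l → ℝ))
    (g : (Fin n → ℤ) → (Fin l → ℤ))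
    (hg : ∀ m : Fin n → ℤ, latC (g m) = f (latC m))
    (k : ℕ) :
    ∑ I ∈ (Finset.univ : Finset (Fin r)).powerset,
      AddMonoidAlgebra.single (g (∑ i ∈ I, v i)) ((-1 : ℂ) ^ I.card) *
        (∑ᶠ m ∈ {m : Fin n → ℤ | latC m ∈ ((k + r - I.card : ℕ) : ℝ) • P + Q},
          AddMonoidAlgebra.single (g m) (1 : ℂ)) = 0 :=
  projected_transform_recursion_general P Q hQpoly hPlat hPne v hvert f g hg k
end
end

section
/- Let n ≥ 1 and let κ, λ, μ, ν be partitions of length at most n such that μ_i ≤ λ_i for all i and ν_i + kμ_i ≤ κ_i + kλ_i for all i, for some positive integer k. Let V = {v_1,…,v_R} be the set of extreme points of the Gelfand–Tsetlin polytope GT_{λ/μ} (all of which are integral arrays). Then there exists an integer r ≥ 0 such that for all l ≥ r: s_{(κ+(l+R)λ)/(ν+(l+R)μ)}(x) = Σ_{∅≠I⊆[R]} (−1)^{1+|I|} · x^{Σ_{i∈I} w(v_i)} · s_{(κ+(l+R−|I|)λ)/(ν+(l+R−|I|)μ)}(x); that is, the sequence {s_{(κ+lλ)/(ν+lμ)}(x)}_{l≥r}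 satisfies a linear recursion with characteristic polynomial ∏_{v∈V} (X − x^{w(v)}). -/
open scoped BigOperators Pointwise

noncomputable section

/-- The Gelfand–Tsetlin polytope of shape `λ/μ`: arrays with top row `λ` and bottom row `μ`
(written in weakly increasing order) that weakly increase in north-east and south-east
direction. -/
def GTPolytope (n : ℕ) (lam mu : Fin n → ℕ) : Set (Fin (n + 1) → Fin n → ℝ) :=
  {x | (∀ j : Fin n, x 0 j = (lam j.rev : ℝ)) ∧
       (∀ j : Fin n, x (Fin.last n) j = (mu j.rev : ℝ)) ∧
       (∀ (i j : Fin n), x i.succ j ≤ x i.castSucc j) ∧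
       (∀ (i j : Fin n) (h : (j : ℕ) + 1 < n), x i.castSucc j ≤ x i.succ ⟨(j : ℕ) + 1, h⟩)}

/-- The weight of a (real) Gelfand–Tsetlin pattern. -/
def gtWeight {n : ℕ} (x : Fin (n + 1) → Fin n → ℝ) : Fin n → ℝ :=
  fun i => ∑ j, (x i.castSucc j - x i.succ j)

/-- The weight of an integral Gelfand–Tsetlin pattern. -/
def gtWeightInt {n : ℕ} (p : Fin (n + 1) → Fin n → ℤ) : Fin n → ℤ :=
  fun i => ∑ j, (p i.castSucc j - p i.succ j)

/-- Coercion of an integral pattern to a real one. -/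
def patC {n : ℕ} (p : Fin (n + 1) → Fin n → ℤ) : Fin (n + 1) → Fin n → ℝ :=
  fun i j => (p i j : ℝ)

/-- The skew Schur polynomial `s_{λ/μ} = ∑_p x^{w(p)}`, the sum over all integral
Gelfand–Tsetlin patterns of shape `λ/μ`. -/
def skewSchur (n : ℕ) (lam mu : Fin n → ℕ) : MvPolynomial (Fin n) ℂ :=
  ∑ᶠ p ∈ {p : Fin (n + 1) → Fin n → ℤ | patC p ∈ GTPolytope n lam mu},
    MvPolynomial.monomial (Finsupp.equivFunOnFinite.symm (fun i => (gtWeightInt p i).toNat)) (1 : ℂ)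

/-!
Write `s_{λ/μ}` as the sum of `x^{w(p)}` over integral Gelfand–Tsetlin patterns `p`, and measure a
pattern by its slacks in the defining inequalities. For `I ⊆ [R]` let `v_I = ∑_{i ∈ I} v_i`, a
pattern of shape `|I|λ/|I|μ`. Translation by `v_I` identifies the patterns of shape
`(κ+(m-|I|)λ)/(ν+(m-|I|)μ)` with those patterns `p` of shape `(κ+mλ)/(ν+mμ)` whose slacks dominate
those of `v_I`, so the recursion says that for each such `p` the alternating sum of `(-1)^|I|` over
the `I` with `v_I` dominated by `p` vanishes.

For `m` large, the inequalities in which `p` has small slack cut out a nonempty face of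
`GT_{λ/μ}`: scaled by `1/m`, a pattern of shape `(κ+mλ)/(ν+mμ)` is close to `GT_{λ/μ}`, and
compactness makes this uniform. A vertex `v_i` of that face is tight wherever `p` has small slack,
so adding `i` to or removing it from `I` does not affect dominance, and the alternating sum
vanishes.
-/

lemma Finset.sum_powerset_filter_neg_one_pow_card_eq_zero {α R : Type*} [DecidableEq α] [Ring R]
    {s : Finset α} {a : α} (ha : a ∈ s) {P : Finset α → Prop} [DecidablePred P]
    (hP : ∀ t ⊆ s, a ∉ t → (P (insert a t) ↔ P t)) :
    ∑ t ∈ s.powerset with P t, (-1 : R) ^ t.card = 0 := by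
  rw [Finset.sum_filter, ← Finset.insert_erase ha,
    Finset.sum_powerset_insert (Finset.notMem_erase a s), ← Finset.sum_add_distrib]
  refine Finset.sum_eq_zero fun t ht => ?_
  have hts : t ⊆ s.erase a := Finset.mem_powerset.1 ht
  have hat : a ∉ t := fun h => Finset.notMem_erase a s (hts h)
  simp only [if_congr (hP t (hts.trans (Finset.erase_subset a s)) hat) rfl rfl,
    Finset.card_insert_of_notMem hat, pow_succ]
  split_ifs <;> simp

lemma Finset.eq_sum_filter_nonempty_of_sum_powerset_eq_zero {α M : Type*} [AddCommGroup M]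
    {s : Finset α} {f : Finset α → M} (h : ∑ t ∈ s.powerset, f t = 0) :
    f ∅ = ∑ t ∈ s.powerset with t.Nonempty, -f t := by
  have hempty : {t ∈ s.powerset | ¬t.Nonempty} = {∅} := by
    ext t
    simp +contextual [Finset.not_nonempty_iff_eq_empty]
  rw [← Finset.sum_filter_add_sum_filter_not _ Finset.Nonempty, hempty,
    Finset.sum_singleton] at h
  rw [Finset.sum_neg_distrib]
  exact eq_neg_of_add_eq_zero_right h

lemma isExtreme_setOf_forall_eq_zero {𝕜 E ι : Type*} [Field 𝕜] [LinearOrder 𝕜]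
    [IsStrictOrderedRing 𝕜] [AddCommGroup E] [Module 𝕜 E] {S : Set E} (l : ι → E →ₗ[𝕜] 𝕜)
    (s : Set ι) (hl : ∀ i ∈ s, ∀ x ∈ S, 0 ≤ l i x) :
    IsExtreme 𝕜 S {x ∈ S | ∀ i ∈ s, l i x = 0} := by
  refine ⟨Set.sep_subset _ _, fun x₁ hx₁ x₂ hx₂ x hx hseg => ?_⟩
  obtain ⟨a, b, ha, hb, -, rfl⟩ := hseg
  refine ⟨hx₁, fun i hi => ?_⟩
  have h₁ := hl i hi x₁ hx₁
  have h₂ := hl i hi x₂ hx₂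
  have h := hx.2 i hi
  rw [map_add, map_smul, map_smul, smul_eq_mul, smul_eq_mul] at h
  nlinarith

namespace GelfandTsetlin

open Filter

variable {n : ℕ}

/-- The inequalities `x (i+1) j ≤ x i j` (left summand) and `x i j ≤ x (i+1) (j+1)` (right
summand) cutting out a Gelfand–Tsetlin polytope; `d` reads `x (lower d) ≤ x (upper d)`. -/
abbrev Ineq (n : ℕ) : Type := (Fin n × Fin n) ⊕ {q : Fin n × Fin n // (q.2 : ℕ) + 1 < n}

def lower : Ineq n → Fin (n + 1) × Fin n
  | .inl q => (q.1.succ, q.2)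
  | .inr q => (q.1.1.castSucc, q.1.2)

def upper : Ineq n → Fin (n + 1) × Fin n
  | .inl q => (q.1.castSucc, q.2)
  | .inr q => (q.1.1.succ, ⟨q.1.2 + 1, q.2⟩)

section Patterns

variable {A : Type*} [CommRing A]

def slack (d : Ineq n) : (Fin (n + 1) → Fin n → A) →ₗ[A] A where
  toFun x := x (upper d).1 (upper d).2 - x (lower d).1 (lower d).2
  map_add' x y := by simp only [Pi.add_apply]; abel
  map_smul' c x := by simp only [Pi.smul_apply, smul_eq_mul, RingHom.id_apply, mul_sub]

lemma slack_apply (d : Ineq n) (x : Fin (n + 1) → Fin n → A) :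
    slack d x = x (upper d).1 (upper d).2 - x (lower d).1 (lower d).2 := rfl

variable [PartialOrder A]

/-- As in `GTPolytope`, the rows `a` and `b` are read backwards. -/
structure IsPattern (a b : Fin n → A) (x : Fin (n + 1) → Fin n → A) : Prop where
  top : ∀ j, x 0 j = a j.rev
  bottom : ∀ j, x (Fin.last n) j = b j.rev
  slack_nonneg : ∀ d, 0 ≤ slack d x

variable {a b a' b' : Fin n → A} {x y : Fin (n + 1) → Fin n → A}

lemma isPattern_iff :
    IsPattern a b x ↔ (∀ j, x 0 j = a j.rev) ∧ (∀ j, x (Fin.last n) j = b j.rev) ∧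
      ∀ d, 0 ≤ slack d x :=
  ⟨fun h => ⟨h.top, h.bottom, h.slack_nonneg⟩, fun ⟨h₁, h₂, h₃⟩ => ⟨h₁, h₂, h₃⟩⟩

lemma IsPattern.smul [IsOrderedRing A] (hx : IsPattern a b x) {c : A} (hc : 0 ≤ c) :
    IsPattern (c • a) (c • b) (c • x) where
  top j := by simp [hx.top j]
  bottom j := by simp [hx.bottom j]
  slack_nonneg d := by rw [map_smul, smul_eq_mul]; exact mul_nonneg hc (hx.slack_nonneg d)

variable [IsOrderedAddMonoid A]

lemma forall_slack_nonneg_iff :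
    (∀ d, 0 ≤ slack d x) ↔ (∀ i j : Fin n, x i.succ j ≤ x i.castSucc j) ∧
      ∀ (i j : Fin n) (h : (j : ℕ) + 1 < n), x i.castSucc j ≤ x i.succ ⟨j + 1, h⟩ := by
  simp [Sum.forall, slack_apply, lower, upper, sub_nonneg]

lemma IsPattern.antitone_column (hx : IsPattern a b x) (j : Fin n) : Antitone fun i => x i j :=
  Fin.antitone_iff_succ_le.2 fun i => by
    simpa [slack_apply, lower, upper] using hx.slack_nonneg (.inl (i, j))

lemma IsPattern.bottom_le (hx : IsPattern a b x) (i : Fin (n + 1)) (j : Fin n) :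
    b j.rev ≤ x i j :=
  hx.bottom j ▸ hx.antitone_column j (Fin.le_last i)

lemma IsPattern.le_top (hx : IsPattern a b x) (i : Fin (n + 1)) (j : Fin n) : x i j ≤ a j.rev :=
  hx.top j ▸ hx.antitone_column j (Fin.zero_le i)

lemma IsPattern.add (hx : IsPattern a b x) (hy : IsPattern a' b' y) :
    IsPattern (a + a') (b + b') (x + y) where
  top j := by simp [hx.top j, hy.top j]
  bottom j := by simp [hx.bottom j, hy.bottom j]
  slack_nonneg d := by rw [map_add]; exact add_nonneg (hx.slack_nonneg d) (hy.slack_nonneg d)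

lemma IsPattern.sub (hx : IsPattern a b x) (hy : IsPattern a' b' y)
    (hyx : ∀ d, slack d y ≤ slack d x) : IsPattern (a - a') (b - b') (x - y) where
  top j := by simp [hx.top j, hy.top j]
  bottom j := by simp [hx.bottom j, hy.bottom j]
  slack_nonneg d := by rw [map_sub, sub_nonneg]; exact hyx d

lemma isPattern_sum {ι : Type*} {s : Finset ι} {a b : ι → Fin n → A}
    {x : ι → Fin (n + 1) → Fin n → A} (h : ∀ i ∈ s, IsPattern (a i) (b i) (x i)) :
    IsPattern (∑ i ∈ s, a i) (∑ i ∈ s, b i) (∑ i ∈ s, x i) where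
  top j := by
    simp only [Finset.sum_apply]
    exact Finset.sum_congr rfl fun i hi => (h i hi).top j
  bottom j := by
    simp only [Finset.sum_apply]
    exact Finset.sum_congr rfl fun i hi => (h i hi).bottom j
  slack_nonneg d := by
    rw [map_sum]
    exact Finset.sum_nonneg fun i hi => (h i hi).slack_nonneg d

end Patterns

lemma mem_GTPolytope_iff {lam mu : Fin n → ℕ} {x : Fin (n + 1) → Fin n → ℝ} :
    x ∈ GTPolytope n lam mu ↔ IsPattern (fun i => (lam i : ℝ)) (fun i => (mu i : ℝ)) x := by
  rw [isPattern_iff, forall_slack_nonneg_iff]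
  rfl

lemma slack_patC (d : Ineq n) (p : Fin (n + 1) → Fin n → ℤ) :
    slack d (patC p) = ((slack d p : ℤ) : ℝ) := by
  simp [slack_apply, patC]

lemma patC_mem_GTPolytope_iff {lam mu : Fin n → ℕ} {p : Fin (n + 1) → Fin n → ℤ} :
    patC p ∈ GTPolytope n lam mu ↔ IsPattern (fun i => (lam i : ℤ)) (fun i => (mu i : ℤ)) p := by
  simp only [mem_GTPolytope_iff, isPattern_iff, slack_patC, patC]
  norm_cast

@[fun_prop]
lemma continuous_slack (d : Ineq n) :
    Continuous fun x : Fin (n + 1) → Fin n → ℝ => slack d x := by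
  simp only [slack_apply]
  fun_prop

lemma isClosed_setOf_isPattern {X : Type*} [TopologicalSpace X] {a b : X → Fin n → ℝ}
    {x : X → Fin (n + 1) → Fin n → ℝ} (ha : Continuous a) (hb : Continuous b)
    (hx : Continuous x) : IsClosed {p | IsPattern (a p) (b p) (x p)} := by
  simp only [isPattern_iff, Set.ofPred_and, Set.ofPred_forall]
  exact (isClosed_iInter fun j => isClosed_eq (by fun_prop) (by fun_prop)).inter
    ((isClosed_iInter fun j => isClosed_eq (by fun_prop) (by fun_prop)).inter
      (isClosed_iInter fun d => isClosed_le continuous_const (by fun_prop)))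

lemma isCompact_GTPolytope (lam mu : Fin n → ℕ) : IsCompact (GTPolytope n lam mu) := by
  have hclosed : IsClosed (GTPolytope n lam mu) := by
    rw [show GTPolytope n lam mu = _ from Set.ext fun _ => mem_GTPolytope_iff]
    exact isClosed_setOf_isPattern continuous_const continuous_const continuous_id
  refine (isCompact_Icc (a := fun (_ : Fin (n + 1)) (j : Fin n) => (mu j.rev : ℝ))
    (b := fun _ j => (lam j.rev : ℝ))).of_isClosed_subset hclosed fun x hx => ?_
  rw [mem_GTPolytope_iff] at hx
  exact ⟨hx.bottom_le, hx.le_top⟩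

def face (lam mu : Fin n → ℕ) (T : Finset (Ineq n)) : Set (Fin (n + 1) → Fin n → ℝ) :=
  {x ∈ GTPolytope n lam mu | ∀ d ∈ (T : Set (Ineq n)), slack d x = 0}

lemma isCompact_face (lam mu : Fin n → ℕ) (T : Finset (Ineq n)) : IsCompact (face lam mu T) := by
  refine (isCompact_GTPolytope lam mu).of_isClosed_subset ?_ (Set.sep_subset _ _)
  rw [face, ← Set.inter_ofPred_eq_sep]
  simp only [Set.ofPred_forall]
  exact (isCompact_GTPolytope lam mu).isClosed.inter
    (isClosed_biInter fun d _ => isClosed_eq (continuous_slack d) continuous_const)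

lemma isExtreme_face (lam mu : Fin n → ℕ) (T : Finset (Ineq n)) :
    IsExtreme ℝ (GTPolytope n lam mu) (face lam mu T) :=
  isExtreme_setOf_forall_eq_zero slack _ fun d _ _ hx => (mem_GTPolytope_iff.1 hx).slack_nonneg d

/-- Its fibre over `t = 1 / m` is `GT((κ+mλ)/(ν+mμ))` scaled by `t`, cut down to slacks below `B`
in `T`; its fibre over `0` lies in `face lam mu T`. -/
def scaledPolytopes (kap lam mu nu : Fin n → ℕ) (T : Finset (Ineq n)) (B : ℝ) :
    Set (ℝ × (Fin (n + 1) → Fin n → ℝ)) :=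
  {p | p.1 ∈ Set.Icc 0 1 ∧
    IsPattern (fun i => lam i + p.1 * kap i) (fun i => mu i + p.1 * nu i) p.2 ∧
      ∀ d ∈ T, slack d p.2 ≤ p.1 * B}

lemma isCompact_scaledPolytopes (kap lam mu nu : Fin n → ℕ) (T : Finset (Ineq n)) (B : ℝ) :
    IsCompact (scaledPolytopes kap lam mu nu T B) := by
  refine ((isCompact_Icc (a := (0 : ℝ)) (b := 1)).prod (isCompact_Icc
    (a := fun (_ : Fin (n + 1)) (_ : Fin n) => (0 : ℝ))
    (b := fun _ j => (lam j.rev + kap j.rev : ℝ)))).of_isClosed_subset ?_ ?_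
  · simp only [scaledPolytopes, Set.ofPred_and, Set.ofPred_forall]
    exact (isClosed_Icc.preimage continuous_fst).inter
      ((isClosed_setOf_isPattern (by fun_prop) (by fun_prop) continuous_snd).inter
        (isClosed_biInter fun d _ => isClosed_le (by fun_prop) (by fun_prop)))
  · rintro ⟨t, y⟩ ⟨⟨ht0, ht1⟩, hy, -⟩
    refine ⟨⟨ht0, ht1⟩, fun i j => ?_, fun i j => ?_⟩
    · exact le_trans (by positivity) (hy.bottom_le i j)
    · exact (hy.le_top i j).trans
        (add_le_add_right (mul_le_of_le_one_left (Nat.cast_nonneg _) ht1) _)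

lemma eventually_exists_le_slack_of_face_eq_empty (kap lam mu nu : Fin n → ℕ)
    {T : Finset (Ineq n)} (hT : face lam mu T = ∅) (B : ℝ) :
    ∀ᶠ m : ℕ in atTop,
      ∀ x ∈ GTPolytope n (fun i => kap i + m * lam i) (fun i => nu i + m * mu i),
        ∃ d ∈ T, B ≤ slack d x := by
  set K := scaledPolytopes kap lam mu nu T B
  have h0 : (0 : ℝ) ∉ Prod.fst '' K := by
    rintro ⟨⟨t, y⟩, ⟨-, hy, hyT⟩, rfl : t = 0⟩
    suffices y ∈ face lam mu T by simp [hT] at this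
    exact ⟨mem_GTPolytope_iff.2 (by simpa using hy),
      fun d hd => le_antisymm (by simpa using hyT d hd) (hy.slack_nonneg d)⟩
  have hfar : ∀ᶠ m : ℕ in atTop, (1 / m : ℝ) ∉ Prod.fst '' K :=
    tendsto_one_div_atTop_nhds_zero_nat.eventually
      ((isCompact_scaledPolytopes kap lam mu nu T B |>.image continuous_fst).isClosed
        |>.isOpen_compl.mem_nhds h0)
  filter_upwards [hfar, eventually_ge_atTop 1] with m hm hm1 x hx
  by_contra! hlt
  have hm0 : (0 : ℝ) < m := by exact_mod_cast hm1
  refine hm ⟨(1 / m, (1 / m : ℝ) • x), ⟨⟨by positivity, (div_le_one hm0).2 (by exact_mod_cast hm1)⟩,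
    ?_, fun d hd => ?_⟩, rfl⟩
  · convert (mem_GTPolytope_iff.1 hx).smul (one_div_nonneg.2 hm0.le) using 1 <;>
      ext i <;> simp <;> field_simp <;> ring
  · rw [map_smul, smul_eq_mul]
    exact mul_le_mul_of_nonneg_left (hlt d hd).le (by positivity)

lemma eventually_exists_extremePoint (kap lam mu nu : Fin n → ℕ) (B : ℝ) :
    ∀ᶠ m : ℕ in atTop,
      ∀ x ∈ GTPolytope n (fun i => kap i + m * lam i) (fun i => nu i + m * mu i),
        ∃ e ∈ (GTPolytope n lam mu).extremePoints ℝ, ∀ d, slack d e = 0 ∨ B ≤ slack d x := by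
  have hT (T : Finset (Ineq n)) : ∀ᶠ m : ℕ in atTop, (face lam mu T).Nonempty ∨
      ∀ x ∈ GTPolytope n (fun i => kap i + m * lam i) (fun i => nu i + m * mu i),
        ∃ d ∈ T, B ≤ slack d x := by
    rcases (face lam mu T).eq_empty_or_nonempty with h | h
    · exact (eventually_exists_le_slack_of_face_eq_empty kap lam mu nu h B).mono
        fun _ => Or.inr
    · exact .of_forall fun _ => Or.inl h
  filter_upwards [eventually_all.2 hT] with m hm x hx
  classical
  set T := Finset.univ.filter fun d => slack d x < B
  obtain ⟨e, he⟩ : ((face lam mu T).extremePoints ℝ).Nonempty := by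
    refine (isCompact_face lam mu T).extremePoints_nonempty ((hm T).resolve_right ?_)
    intro h
    obtain ⟨d, hd, hBd⟩ := h x hx
    exact (Finset.mem_filter.1 hd).2.not_ge hBd
  refine ⟨e, (isExtreme_face lam mu T).extremePoints_subset_extremePoints he, fun d => ?_⟩
  by_cases hd : slack d x < B
  · exact .inl (he.1.2 d (by simpa [T] using hd))
  · exact .inr (not_lt.1 hd)

lemma finite_setOf_patC_mem_GTPolytope (lam mu : Fin n → ℕ) :
    {p : Fin (n + 1) → Fin n → ℤ | patC p ∈ GTPolytope n lam mu}.Finite :=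
  (Set.finite_Icc (fun (_ : Fin (n + 1)) (j : Fin n) => (mu j.rev : ℤ))
    (fun _ j => (lam j.rev : ℤ))).subset fun _ hp =>
      ⟨(patC_mem_GTPolytope_iff.1 hp).bottom_le, (patC_mem_GTPolytope_iff.1 hp).le_top⟩

def patterns (lam mu : Fin n → ℕ) : Finset (Fin (n + 1) → Fin n → ℤ) :=
  (finite_setOf_patC_mem_GTPolytope lam mu).toFinset

lemma mem_patterns {lam mu : Fin n → ℕ} {p : Fin (n + 1) → Fin n → ℤ} :
    p ∈ patterns lam mu ↔ IsPattern (fun i => (lam i : ℤ)) (fun i => (mu i : ℤ)) p := by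
  rw [patterns, Set.Finite.mem_toFinset, Set.mem_ofPred_eq, patC_mem_GTPolytope_iff]

def weight (p : Fin (n + 1) → Fin n → ℤ) : Fin n →₀ ℕ :=
  Finsupp.equivFunOnFinite.symm fun i => (gtWeightInt p i).toNat

@[simp]
lemma weight_zero : weight (0 : Fin (n + 1) → Fin n → ℤ) = 0 := by
  ext
  simp [weight, gtWeightInt]

lemma skewSchur_eq_sum (lam mu : Fin n → ℕ) :
    skewSchur n lam mu = ∑ p ∈ patterns lam mu, MvPolynomial.monomial (weight p) 1 := by
  rw [skewSchur, ← finsum_mem_coe_finset, patterns, Set.Finite.coe_toFinset]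
  rfl

lemma gtWeightInt_eq_sum_slack (p : Fin (n + 1) → Fin n → ℤ) (i : Fin n) :
    gtWeightInt p i = ∑ j, slack (.inl (i, j)) p :=
  rfl

lemma gtWeightInt_nonneg {p : Fin (n + 1) → Fin n → ℤ} (hp : ∀ d, 0 ≤ slack d p) (i : Fin n) :
    0 ≤ gtWeightInt p i := by
  rw [gtWeightInt_eq_sum_slack]
  exact Finset.sum_nonneg fun j _ => hp _

lemma weight_add {p q : Fin (n + 1) → Fin n → ℤ} (hp : ∀ d, 0 ≤ slack d p)
    (hq : ∀ d, 0 ≤ slack d q) : weight (p + q) = weight p + weight q := by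
  ext i
  have hpq : gtWeightInt (p + q) i = gtWeightInt p i + gtWeightInt q i := by
    simp only [gtWeightInt_eq_sum_slack, map_add, Finset.sum_add_distrib]
  simp only [weight, Finsupp.add_apply, Finsupp.coe_equivFunOnFinite_symm, hpq,
    Int.toNat_add (gtWeightInt_nonneg hp i) (gtWeightInt_nonneg hq i)]

lemma weight_sum {ι : Type*} {s : Finset ι} {v : ι → Fin (n + 1) → Fin n → ℤ}
    (hv : ∀ i ∈ s, ∀ d, 0 ≤ slack d (v i)) :
    weight (∑ i ∈ s, v i) =
      Finsupp.equivFunOnFinite.symm fun j => ∑ i ∈ s, (gtWeightInt (v i) j).toNat := by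
  ext j
  have hsum : gtWeightInt (∑ i ∈ s, v i) j = ∑ i ∈ s, gtWeightInt (v i) j := by
    simp only [gtWeightInt_eq_sum_slack, map_sum]
    exact Finset.sum_comm
  simp only [weight, Finsupp.coe_equivFunOnFinite_symm, hsum]
  zify
  rw [Int.toNat_of_nonneg (Finset.sum_nonneg fun i hi => gtWeightInt_nonneg (hv i hi) j)]
  exact Finset.sum_congr rfl fun i hi => (Int.toNat_of_nonneg (gtWeightInt_nonneg (hv i hi) j)).symm

/-- Translation by a pattern `u` of shape `a'/b'` identifies the patterns of shape `a/b` with the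
patterns of shape `(a+a')/(b+b')` whose slacks dominate those of `u`. -/
lemma monomial_weight_mul_skewSchur {a b a' b' : Fin n → ℕ} {u : Fin (n + 1) → Fin n → ℤ}
    (hu : IsPattern (fun i => (a' i : ℤ)) (fun i => (b' i : ℤ)) u) (c : ℂ) :
    MvPolynomial.monomial (weight u) c * skewSchur n a b =
      ∑ p ∈ patterns (a + a') (b + b') with ∀ d, slack d u ≤ slack d p,
        MvPolynomial.monomial (weight p) c := by
  rw [skewSchur_eq_sum, Finset.mul_sum]
  refine Finset.sum_nbij' (· + u) (· - u) (fun q hq => ?_) (fun p hp => ?_)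
    (fun q _ => add_sub_cancel_right q u) (fun p _ => sub_add_cancel p u) (fun q hq => ?_)
  · rw [mem_patterns] at hq
    refine Finset.mem_filter.2 ⟨mem_patterns.2 ?_, fun d => ?_⟩
    · convert hq.add hu using 1 <;> ext <;> simp
    · rw [map_add]
      exact le_add_of_nonneg_left (hq.slack_nonneg d)
  · obtain ⟨hp, hup⟩ := Finset.mem_filter.1 hp
    refine mem_patterns.2 ?_
    convert (mem_patterns.1 hp).sub hu hup using 1 <;> ext <;> simp
  · rw [MvPolynomial.monomial_mul, mul_one, add_comm,
      weight_add (mem_patterns.1 hq).slack_nonneg hu.slack_nonneg]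

lemma sum_powerset_monomial_mul_skewSchur_eq_zero (kap lam mu nu : Fin n → ℕ) {ι : Type*}
    [Fintype ι] [DecidableEq ι] (v : ι → Fin (n + 1) → Fin n → ℤ)
    (hv : ∀ i, IsPattern (fun j => (lam j : ℤ)) (fun j => (mu j : ℤ)) (v i))
    {C : ℤ} (hC : ∀ (I : Finset ι) d, slack d (∑ i ∈ I, v i) ≤ C) {m : ℕ}
    (hm : Fintype.card ι ≤ m)
    (hcone : ∀ p ∈ patterns (fun j => kap j + m * lam j) (fun j => nu j + m * mu j),
      ∃ i, ∀ d, slack d (v i) = 0 ∨ C ≤ slack d p) :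
    ∑ I ∈ (Finset.univ : Finset ι).powerset,
      MvPolynomial.monomial (weight (∑ i ∈ I, v i)) ((-1 : ℂ) ^ I.card) *
        skewSchur n (fun j => kap j + (m - I.card) * lam j)
          (fun j => nu j + (m - I.card) * mu j) = 0 := by
  set P := patterns (fun j => kap j + m * lam j) (fun j => nu j + m * mu j)
  have hsum (I : Finset ι) : IsPattern (fun j => ((I.card * lam j : ℕ) : ℤ))
      (fun j => ((I.card * mu j : ℕ) : ℤ)) (∑ i ∈ I, v i) := by
    convert isPattern_sum fun i (_ : i ∈ I) => hv i using 1 <;> ext <;> simp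
  have hshape (a b : Fin n → ℕ) (I : Finset ι) :
      (fun j => a j + (m - I.card) * b j) + (fun j => I.card * b j) = fun j => a j + m * b j := by
    ext j
    simp [add_assoc, ← add_mul, Nat.sub_add_cancel (I.card_le_univ.trans hm)]
  have hvanish (p) (hp : p ∈ P) : ∑ I ∈ (Finset.univ : Finset ι).powerset with
      ∀ d, slack d (∑ i ∈ I, v i) ≤ slack d p, (-1 : ℂ) ^ I.card = 0 := by
    obtain ⟨i₀, hi₀⟩ := hcone p hp
    refine Finset.sum_powerset_filter_neg_one_pow_card_eq_zero (Finset.mem_univ i₀)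
      fun I _ hI => ⟨fun h d => ?_, fun h d => ?_⟩
    · refine le_trans ?_ (h d)
      rw [Finset.sum_insert hI, map_add]
      exact le_add_of_nonneg_left ((hv i₀).slack_nonneg d)
    · rcases hi₀ d with h0 | hCp
      · rw [Finset.sum_insert hI, map_add, h0, zero_add]
        exact h d
      · exact (hC _ d).trans hCp
  calc _ = ∑ I ∈ (Finset.univ : Finset ι).powerset,
        ∑ p ∈ P with ∀ d, slack d (∑ i ∈ I, v i) ≤ slack d p,
          MvPolynomial.monomial (weight p) ((-1 : ℂ) ^ I.card) :=
        Finset.sum_congr rfl fun I _ => by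
          rw [monomial_weight_mul_skewSchur (hsum I), hshape, hshape]
    _ = ∑ p ∈ P, ∑ I ∈ (Finset.univ : Finset ι).powerset with
          ∀ d, slack d (∑ i ∈ I, v i) ≤ slack d p,
          MvPolynomial.monomial (weight p) ((-1 : ℂ) ^ I.card) :=
        Finset.sum_comm' fun I p => by simp only [Finset.mem_filter]; tauto
    _ = 0 := Finset.sum_eq_zero fun p hp => by rw [← map_sum, hvanish p hp, map_zero]

end GelfandTsetlin

open GelfandTsetlin Filter in
theorem schur_recursion_vertices_general (n : ℕ)
    (kap lam mu nu : Fin n → ℕ)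
    (R : ℕ) (v : Fin R → (Fin (n + 1) → Fin n → ℤ))
    (hvert : Set.extremePoints ℝ (GTPolytope n lam mu) = Set.range (fun i => patC (v i))) :
    ∃ r : ℕ, ∀ l : ℕ, r ≤ l →
      skewSchur n (fun i => kap i + (l + R) * lam i) (fun i => nu i + (l + R) * mu i) =
        ∑ I ∈ (Finset.univ : Finset (Fin R)).powerset.filter (fun I => I.Nonempty),
          MvPolynomial.monomial
              (Finsupp.equivFunOnFinite.symm
                (fun j => ∑ i ∈ I, (gtWeightInt (v i) j).toNat))
              ((-1 : ℂ) ^ (1 + I.card)) *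
            skewSchur n (fun i => kap i + (l + R - I.card) * lam i)
              (fun i => nu i + (l + R - I.card) * mu i) := by
  have hv (i : Fin R) : IsPattern (fun j => (lam j : ℤ)) (fun j => (mu j : ℤ)) (v i) :=
    patC_mem_GTPolytope_iff.1 (extremePoints_subset (hvert ▸ Set.mem_range_self i))
  obtain ⟨C, hC⟩ := Finite.exists_le fun Id : Finset (Fin R) × Ineq n =>
    slack Id.2 (∑ i ∈ Id.1, v i)
  obtain ⟨r, hr⟩ := eventually_atTop.1 (eventually_exists_extremePoint kap lam mu nu (C : ℝ))
  refine ⟨r, fun l hl => ?_⟩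
  have hcone (p) (hp : p ∈ patterns (fun j => kap j + (l + R) * lam j)
      (fun j => nu j + (l + R) * mu j)) : ∃ i, ∀ d, slack d (v i) = 0 ∨ C ≤ slack d p := by
    obtain ⟨e, he, he0⟩ := hr (l + R) (by omega) (patC p)
      (patC_mem_GTPolytope_iff.2 (mem_patterns.1 hp))
    obtain ⟨i, rfl⟩ := hvert ▸ he
    exact ⟨i, fun d => by exact_mod_cast (slack_patC d (v i) ▸ slack_patC d p ▸ he0 d)⟩
  convert Finset.eq_sum_filter_nonempty_of_sum_powerset_eq_zero
    (sum_powerset_monomial_mul_skewSchur_eq_zero kap lam mu nu v hv (fun I d => hC (I, d))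
      (by simp) hcone) using 1
  · simp
  · refine Finset.sum_congr rfl fun I _ => ?_
    rw [weight_sum fun i _ => (hv i).slack_nonneg, pow_add, pow_one, neg_one_mul, map_neg,
      neg_mul]

theorem schur_recursion_vertices (n : ℕ) (hn : 1 ≤ n)
    (kap lam mu nu : Fin n → ℕ)
    (hkap : Antitone kap) (hlam : Antitone lam) (hmu : Antitone mu) (hnu : Antitone nu)
    (hml : ∀ i, mu i ≤ lam i)
    (k : ℕ) (hk : 0 < k) (hincl : ∀ i, nu i + k * mu i ≤ kap i + k * lam i)
    (R : ℕ) (v : Fin R → (Fin (n + 1) → Fin n → ℤ)) (hv : Function.Injective v)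
    (hvert : Set.extremePoints ℝ (GTPolytope n lam mu) = Set.range (fun i => patC (v i))) :
    ∃ r : ℕ, ∀ l : ℕ, r ≤ l →
      skewSchur n (fun i => kap i + (l + R) * lam i) (fun i => nu i + (l + R) * mu i) =
        ∑ I ∈ (Finset.univ : Finset (Fin R)).powerset.filter (fun I => I.Nonempty),
          MvPolynomial.monomial
              (Finsupp.equivFunOnFinite.symm
                (fun j => ∑ i ∈ I, (gtWeightInt (v i) j).toNat))
              ((-1 : ℂ) ^ (1 + I.card)) *
            skewSchur n (fun i => kap i + (l + R - I.card) * lam i)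
              (fun i => nu i + (l + R - I.card) * mu i) :=
  schur_recursion_vertices_general n kap lam mu nu R v hvert
end
end
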